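/- Under the P²-AirComp protocol, the server learns nothing about the individual messages beyond their sum: I({W_k}_{k∈[K]}; y | W) = 0, where y = √P Σ_k e_k + z, e_k = (W_k + S_k) mod 1, W = Σ_k W_k, and z is channel noise independent of everything else. -/

import Mathlib

open MeasureTheory ProbabilityTheory

/-- Zero-centered modulo: `x mod 1 := x - ⌊x + 1/2⌋`. -/
noncomputable def zmod1 (x : ℝ) : ℝ := x - ⌊x + (1 : ℝ) / 2⌋

/-- Conditional mutual information `I(X; Y | Z)`, defined as the Kullback–Leibler divergence
(expected log-likelihood ratio) between the joint law of `(Z, (X, Y))` and the conditionally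
independent coupling built from the regular conditional distributions of `X` and `Y` given
`Z`. `I(X; Y | Z) = 0` iff `X ⟂ Y | Z`. -/
noncomputable def condMutualInfo {Ω α β γ : Type*} [MeasurableSpace Ω]
    [MeasurableSpace α] [StandardBorelSpace α] [Nonempty α]
    [MeasurableSpace β] [StandardBorelSpace β] [Nonempty β]
    [MeasurableSpace γ]
    (μ : Measure Ω) [IsFiniteMeasure μ] (X : Ω → α) (Y : Ω → β) (Z : Ω → γ) : ℝ :=
  ∫ p, llr (μ.map fun ω => (Z ω, (X ω, Y ω)))
      ((μ.map Z) ⊗ₘ ((condDistrib X Z μ).prod (condDistrib Y Z μ))) p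
    ∂(μ.map fun ω => (Z ω, (X ω, Y ω)))

/-! Fix a user `k₀` and let `T = Σ_{i ≠ k₀} e_i`. Since `Σ_k S_k ≡ 0 (mod 1)`, the remaining
masked value is `e_{k₀} = (W - T) mod 1`, so `y = F(W, V)` for a fixed map `F` and
`V = ((e_i)_{i ≠ k₀}, z)`. The keys `S_i`, `i ≠ k₀`, are i.i.d. uniform on the cell and
independent of the messages, and translation modulo `1` preserves this law, so `V` is independent
of the messages. Given `W`, the observation is thus produced by a channel that never looks at the
messages: the joint law of `(W, (W_k)_k, y)` is the conditionally independent coupling itself,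
and the log-likelihood ratio defining `I` vanishes. -/

section CondMutualInfo

variable {Ω α β γ δ : Type*} [MeasurableSpace Ω] [MeasurableSpace α] [MeasurableSpace β]
  [MeasurableSpace γ] [MeasurableSpace δ]

noncomputable def channelKernel (F : γ → δ → β) (ν : Measure δ) : Kernel γ β :=
  (Kernel.id ×ₖ Kernel.const γ ν).map (Function.uncurry F)

instance (F : γ → δ → β) (ν : Measure δ) : IsSFiniteKernel (channelKernel F ν) := by
  rw [channelKernel]; infer_instance

lemma isMarkovKernel_channelKernel {F : γ → δ → β} (hF : Measurable (Function.uncurry F))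
    (ν : Measure δ) [IsProbabilityMeasure ν] : IsMarkovKernel (channelKernel F ν) :=
  Kernel.IsMarkovKernel.map _ hF

lemma channelKernel_apply {F : γ → δ → β} (hF : Measurable (Function.uncurry F))
    (ν : Measure δ) [SFinite ν] (c : γ) : channelKernel F ν c = ν.map (F c) := by
  rw [channelKernel, Kernel.map_apply _ hF, Kernel.prod_apply, Kernel.id_apply,
    Kernel.const_apply, Measure.dirac_prod, Measure.map_map hF measurable_prodMk_left]
  rfl

lemma map_prod_eq_compProd_prod_channelKernel {F : γ → δ → β}
    (hF : Measurable (Function.uncurry F)) (ρ : Measure γ) [SFinite ρ] (η : Kernel γ α)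
    [IsSFiniteKernel η] (ν : Measure δ) [SFinite ν] :
    ((ρ ⊗ₘ η).prod ν).map (fun q => (q.1.1, (q.1.2, F q.1.1 q.2))) =
      ρ ⊗ₘ (η ×ₖ channelKernel F ν) := by
  have hh : Measurable fun q : (γ × α) × δ => (q.1.1, (q.1.2, F q.1.1 q.2)) := by fun_prop
  ext s hs
  rw [Measure.map_apply hh hs, Measure.prod_apply (hh hs),
    Measure.lintegral_compProd (measurable_measure_prodMk_left (hh hs)),
    Measure.compProd_apply hs]
  refine lintegral_congr fun c => ?_
  rw [Kernel.prod_apply, Measure.prod_apply (measurable_prodMk_left hs)]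
  refine lintegral_congr fun a => ?_
  rw [channelKernel_apply hF, Measure.map_apply hF.of_uncurry_left
    (measurable_prodMk_left (measurable_prodMk_left hs))]
  rfl

variable [StandardBorelSpace α] [Nonempty α] [StandardBorelSpace β] [Nonempty β]

lemma condMutualInfo_eq_zero_of_map_eq_compProd (μ : Measure Ω) [IsFiniteMeasure μ]
    {X : Ω → α} {Y : Ω → β} {Z : Ω → γ}
    (h : μ.map (fun ω => (Z ω, (X ω, Y ω))) =
      μ.map Z ⊗ₘ (condDistrib X Z μ ×ₖ condDistrib Y Z μ)) :
    condMutualInfo μ X Y Z = 0 := by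
  rw [condMutualInfo, ← h, integral_congr_ae (llr_self _)]
  exact integral_zero _ _

theorem condMutualInfo_eq_zero_of_indepFun (μ : Measure Ω) [IsProbabilityMeasure μ]
    {X : Ω → α} {Y : Ω → β} {Z : Ω → γ} {V : Ω → δ} {F : γ → δ → β}
    (hX : Measurable X) (hZ : Measurable Z) (hV : Measurable V)
    (hF : Measurable (Function.uncurry F)) (hY : ∀ ω, Y ω = F (Z ω) (V ω))
    (hindep : IndepFun (fun ω => (Z ω, X ω)) V μ) :
    condMutualInfo μ X Y Z = 0 := by
  obtain rfl : Y = fun ω => F (Z ω) (V ω) := funext hY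
  set κ := channelKernel F (μ.map V)
  have : IsProbabilityMeasure (μ.map V) := Measure.isProbabilityMeasure_map hV.aemeasurable
  have : IsMarkovKernel κ := isMarkovKernel_channelKernel hF _
  have hjoint : μ.map (fun ω => (Z ω, (X ω, F (Z ω) (V ω)))) =
      μ.map Z ⊗ₘ (condDistrib X Z μ ×ₖ κ) := by
    rw [← map_prod_eq_compProd_prod_channelKernel hF, compProd_map_condDistrib hX.aemeasurable,
      ← (indepFun_iff_map_prod_eq_prod_map_map (by fun_prop) hV.aemeasurable).mp hindep,
      Measure.map_map (by fun_prop) (by fun_prop)]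
    rfl
  have hκ : condDistrib (fun ω => F (Z ω) (V ω)) Z μ =ᵐ[μ.map Z] κ := by
    refine condDistrib_ae_eq_of_measure_eq_compProd Z (by fun_prop) ?_
    rw [← Kernel.snd_prod (condDistrib X Z μ) κ, Kernel.snd_eq,
      Measure.compProd_map measurable_snd, ← hjoint, Measure.map_map (by fun_prop) (by fun_prop)]
    rfl
  refine condMutualInfo_eq_zero_of_map_eq_compProd μ (hjoint.trans (Measure.compProd_congr ?_))
  filter_upwards [hκ] with c hc
  rw [Kernel.prod_apply, Kernel.prod_apply, hc]

end CondMutualInfo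

namespace ProbabilityTheory

variable {Ω α β γ : Type*} [MeasurableSpace Ω] [MeasurableSpace α] [MeasurableSpace β]
  [MeasurableSpace γ] {μ : Measure Ω} [IsProbabilityMeasure μ] {X : Ω → α} {B : Ω → β}

lemma IndepFun.prodMk_right_of_indepFun_prodMk {N : Ω → γ} (hX : Measurable X)
    (hB : Measurable B) (hN : Measurable N) (hXB : IndepFun X B μ)
    (hXBN : IndepFun (fun ω => (X ω, B ω)) N μ) :
    IndepFun X (fun ω => (B ω, N ω)) μ := by
  have hlawXB := (indepFun_iff_map_prod_eq_prod_map_map hX.aemeasurable hB.aemeasurable).mp hXB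
  have hlawXBN := (indepFun_iff_map_prod_eq_prod_map_map (hX.prodMk hB).aemeasurable
    hN.aemeasurable).mp hXBN
  have hlawBN := (indepFun_iff_map_prod_eq_prod_map_map hB.aemeasurable hN.aemeasurable).mp
    (hXBN.comp measurable_snd measurable_id)
  rw [indepFun_iff_map_prod_eq_prod_map_map hX.aemeasurable (hB.prodMk hN).aemeasurable,
    hlawBN, ← Measure.prodAssoc_prod, ← hlawXB, ← hlawXBN,
    Measure.map_map (by fun_prop) (by fun_prop)]
  rfl

lemma IndepFun.indepFun_of_measurePreserving_fiberwise {g : α → β → β} (hX : Measurable X)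
    (hB : Measurable B) (hg : Measurable (Function.uncurry g)) (hXB : IndepFun X B μ)
    (hpres : ∀ x, MeasurePreserving (g x) (μ.map B) (μ.map B)) :
    IndepFun X (fun ω => g (X ω) (B ω)) μ := by
  have : IsProbabilityMeasure (μ.map X) := Measure.isProbabilityMeasure_map hX.aemeasurable
  have : IsProbabilityMeasure (μ.map B) := Measure.isProbabilityMeasure_map hB.aemeasurable
  have hlaw : μ.map (fun ω => (X ω, g (X ω) (B ω))) = (μ.map X).prod (μ.map B) := by
    rw [← ((MeasurePreserving.id (μ.map X)).skew_product hg
        (ae_of_all _ fun x => (hpres x).map_eq)).map_eq,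
      ← (indepFun_iff_map_prod_eq_prod_map_map hX.aemeasurable hB.aemeasurable).mp hXB,
      Measure.map_map (by fun_prop) (by fun_prop)]
    rfl
  have hgB : μ.map (fun ω => g (X ω) (B ω)) = μ.map B := by
    rw [← Measure.snd_map_prodMk hX, hlaw, Measure.snd_prod]
  rw [indepFun_iff_map_prod_eq_prod_map_map hX.aemeasurable (by fun_prop), hgB, hlaw]

end ProbabilityTheory

lemma zmod1_eq_sub_round (x : ℝ) : zmod1 x = x - round x := by
  rw [zmod1, round_eq]

@[fun_prop]
lemma measurable_zmod1 : Measurable zmod1 := by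
  unfold zmod1
  fun_prop

lemma zmod1_add_intCast (x : ℝ) (n : ℤ) : zmod1 (x + n) = zmod1 x := by
  rw [zmod1_eq_sub_round, zmod1_eq_sub_round, round_add_intCast]
  push_cast
  ring

lemma zmod1_eq_toIocMod {x : ℝ} (hx : toIocMod one_pos (-(1 / 2)) x ≠ 1 / 2) :
    zmod1 x = toIocMod one_pos (-(1 / 2)) x := by
  set t := toIocMod one_pos (-(1 / 2) : ℝ) x
  obtain ⟨hlo, hhi⟩ : t ∈ Set.Ioc (-(1 / 2)) (-(1 / 2) + 1) := toIocMod_mem_Ioc _ _ _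
  have hx' : x = t + toIocDiv one_pos (-(1 / 2) : ℝ) x := by
    rw [← zsmul_one, ← self_sub_toIocMod, add_sub_cancel]
  rw [hx', zmod1_add_intCast, zmod1_eq_sub_round, sub_eq_self, Int.cast_eq_zero,
    round_eq_zero_iff]
  exact ⟨hlo.le, lt_of_le_of_ne (by linarith) hx⟩

lemma measurePreserving_zmod1_const_add (c : ℝ) :
    MeasurePreserving (fun v => zmod1 (c + v)) (volume.restrict (Set.Ioc (-(1 / 2)) (1 / 2)))
      (volume.restrict (Set.Ioc (-(1 / 2)) (1 / 2))) := by
  set u := volume.restrict (Set.Ioc (-(1 / 2) : ℝ) (1 / 2))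
  -- rotation of the circle `ℝ / ℤ`, read off in the fundamental domain `(-1/2, 1/2]`
  have hmod : MeasurePreserving (fun v => toIocMod one_pos (-(1 / 2)) (c + v)) u u := by
    have := (measurePreserving_subtype_coe measurableSet_Ioc).comp
      ((AddCircle.measurePreserving_equivIoc 1 (a := -(1 / 2))).comp
        ((measurePreserving_add_left volume (c : AddCircle (1 : ℝ))).comp
          (AddCircle.measurePreserving_mk 1 (-(1 / 2)))))
    rw [show u = volume.restrict (Set.Ioc (-(1 / 2)) (-(1 / 2) + 1)) by norm_num [u]]
    convert this using 2 with v
    simp only [Function.comp_apply, ← AddCircle.coe_add]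
    rw [AddCircle.equivIoc, QuotientAddGroup.equivIocMod_coe]
  -- `zmod1` lands in `[-1/2, 1/2)` and `toIocMod` in `(-1/2, 1/2]`; they differ only at `1/2`
  have hae : (fun v => zmod1 (c + v)) =ᵐ[u] fun v => toIocMod one_pos (-(1 / 2)) (c + v) := by
    have hnull : u ((fun v => toIocMod one_pos (-(1 / 2)) (c + v)) ⁻¹' {1 / 2}) = 0 := by
      rw [hmod.measure_preimage (measurableSet_singleton _).nullMeasurableSet]
      simp [u]
    filter_upwards [measure_eq_zero_iff_ae_notMem.mp hnull] with v hv
    exact zmod1_eq_toIocMod hv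
  exact ⟨measurable_zmod1.comp (measurable_const_add c),
    by rw [Measure.map_congr hae, hmod.map_eq]⟩

lemma sum_zmod1_add_eq_add_zmod1 {ι : Type*} [Fintype ι] [DecidableEq ι] (w s : ι → ℝ)
    (hs : zmod1 (∑ k, s k) = 0) (k₀ : ι) :
    ∑ k, zmod1 (w k + s k) =
      (∑ i : {k // k ≠ k₀}, zmod1 (w i + s i)) +
        zmod1 (∑ k, w k - ∑ i : {k // k ≠ k₀}, zmod1 (w i + s i)) := by
  rw [zmod1_eq_sub_round, sub_eq_zero] at hs
  have hdiff : ∑ k, w k - ∑ i : {k // k ≠ k₀}, zmod1 (w i + s i) =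
      w k₀ + s k₀ +
        ((∑ i : {k // k ≠ k₀}, round (w i + s i) - round (∑ k, s k) : ℤ) : ℝ) := by
    have hsplit := Fintype.sum_eq_add_sum_subtype_ne s k₀
    rw [Fintype.sum_eq_add_sum_subtype_ne w k₀]
    simp only [zmod1_eq_sub_round, Finset.sum_sub_distrib, Finset.sum_add_distrib]
    push_cast
    linarith
  rw [hdiff, zmod1_add_intCast, Fintype.sum_eq_add_sum_subtype_ne _ k₀, add_comm]

lemma indepFun_maskedMessages_noise {Ω ι : Type*} [MeasurableSpace Ω] {μ : Measure Ω}
    [IsProbabilityMeasure μ] {D : ℕ} {p : ι → Prop} [Fintype {k // p k}]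
    {W S : ι → Ω → Fin D → ℝ} {z : Ω → Fin D → ℝ}
    (hW : ∀ k, Measurable (W k)) (hS : ∀ k, Measurable (S k)) (hz : Measurable z)
    (hSunif : ∀ i : {k // p k}, μ.map (S i) =
      Measure.pi fun _ : Fin D => volume.restrict (Set.Ioc (-(1 / 2) : ℝ) (1 / 2)))
    (hSindep : iIndepFun (fun i : {k // p k} => S i) μ)
    (hWS : IndepFun (fun ω k => W k ω) (fun ω k => S k ω) μ)
    (hzWS : IndepFun z (fun ω => (fun k => W k ω, fun k => S k ω)) μ) :
    IndepFun (fun ω k => W k ω)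
      (fun ω => (fun (i : {k // p k}) d => zmod1 (W i ω d + S i ω d), z ω)) μ := by
  set X := fun ω k => W k ω
  set B := fun ω (i : {k // p k}) => S i ω
  have hX : Measurable X := measurable_pi_lambda _ hW
  have hB : Measurable B := measurable_pi_lambda _ fun i => hS i
  have hrestrict : Measurable fun (s : ι → Fin D → ℝ) (i : {k // p k}) => s i := by fun_prop
  have hXB : IndepFun X B μ := hWS.comp measurable_id hrestrict
  have hXBz : IndepFun (fun ω => (X ω, B ω)) z μ :=
    (hzWS.comp measurable_id (measurable_id.prodMap hrestrict)).symm
  have hBz : μ.map (fun ω => (B ω, z ω)) =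
      (Measure.pi fun i : {k // p k} => μ.map (S i)).prod (μ.map z) := by
    rw [← hSindep.map_fun_eq_pi_map fun i : {k // p k} => (hS i).aemeasurable]
    exact (indepFun_iff_map_prod_eq_prod_map_map hB.aemeasurable hz.aemeasurable).mp
      (hXBz.comp measurable_snd measurable_id)
  refine (hXB.prodMk_right_of_indepFun_prodMk hX hB hz hXBz).indepFun_of_measurePreserving_fiberwise
    (g := fun (x : ι → Fin D → ℝ) (q : ({k // p k} → Fin D → ℝ) × (Fin D → ℝ)) =>
      (fun i d => zmod1 (x i d + q.1 i d), q.2))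
    hX (hB.prodMk hz) (by fun_prop) fun x => ?_
  simp_rw [hBz, hSunif]
  exact (measurePreserving_pi _ _ fun i : {k // p k} => measurePreserving_pi _ _ fun d =>
    measurePreserving_zmod1_const_add (x i d)).prod (MeasurePreserving.id _)

theorem server_perfect_privacy_general
    {Ω : Type*} [MeasurableSpace Ω]
    (μ : Measure Ω) [IsProbabilityMeasure μ]
    (K D : ℕ) (P : ℝ)
    (W S : Fin K → Ω → Fin D → ℝ) (z : Ω → Fin D → ℝ)
    (hWmeas : ∀ k, Measurable (W k)) (hSmeas : ∀ k, Measurable (S k))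
    (hzmeas : Measurable z)
    -- each key is uniform on the torus cell `(-1/2, 1/2]^D`
    (hSunif : ∀ k, μ.map (S k) =
      Measure.pi fun _ : Fin D => volume.restrict (Set.Ioc (-(1 / 2) : ℝ) (1 / 2)))
    -- modulo-zero-sum condition
    (hzero : ∀ ω d, zmod1 (∑ k, S k ω d) = 0)
    -- any `K-1` keys are mutually independent
    (hK1indep : ∀ k0 : Fin K,
      iIndepFun (fun i : {k : Fin K // k ≠ k0} => S i) μ)
    -- keys are independent of the messages
    (hWSindep : IndepFun (fun ω (k : Fin K) => W k ω) (fun ω (k : Fin K) => S k ω) μ)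
    -- channel noise `z ~ N(0, N_0 I_D)`, independent of messages and keys
    (hzindep : IndepFun z (fun ω => (fun k : Fin K => W k ω, fun k : Fin K => S k ω)) μ) :
    condMutualInfo μ
      (fun ω (k : Fin K) => W k ω)
      (fun ω (d : Fin D) => Real.sqrt P * ∑ k, zmod1 (W k ω d + S k ω d) + z ω d)
      (fun ω (d : Fin D) => ∑ k, W k ω d) = 0 := by
  have hX : Measurable fun ω (k : Fin K) => W k ω := measurable_pi_lambda _ hWmeas
  have hsum : Measurable fun (x : Fin K → Fin D → ℝ) (d : Fin D) => ∑ k, x k d := by fun_prop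
  rcases K.eq_zero_or_pos with rfl | hK
  · refine condMutualInfo_eq_zero_of_indepFun μ hX (hsum.comp hX) hzmeas
      (F := fun _ n => n) measurable_snd (fun ω => by simp) ?_
    exact (hzindep.comp measurable_id
      ((hsum.prodMk measurable_id).comp measurable_fst)).symm
  · set k₀ : Fin K := ⟨0, hK⟩
    refine condMutualInfo_eq_zero_of_indepFun μ hX (hsum.comp hX)
      (V := fun ω => (fun (i : {k // k ≠ k₀}) d => zmod1 (W i ω d + S i ω d), z ω))
      (by fun_prop)
      (F := fun w (q : ({k // k ≠ k₀} → Fin D → ℝ) × (Fin D → ℝ)) d =>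
        Real.sqrt P * (∑ i, q.1 i d + zmod1 (w d - ∑ i, q.1 i d)) + q.2 d)
      (by fun_prop) (fun ω => funext fun d => ?_) ?_
    · rw [sum_zmod1_add_eq_add_zmod1 (W · ω d) (S · ω d) (hzero ω d) k₀]
    · exact (indepFun_maskedMessages_noise hWmeas hSmeas hzmeas (fun i => hSunif i)
        (hK1indep k₀) hWSindep hzindep).comp (hsum.prodMk measurable_id) measurable_id

/-- Perfect privacy at the server in P²-AirComp: the server's observation
`y = √P Σ_k e_k + z`, with `e_k = (W_k + S_k) mod 1`, reveals nothing about the individual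
messages beyond their sum, i.e. `I({W_k}; y | W) = 0` where `W = Σ_k W_k`. -/
theorem server_perfect_privacy
    {Ω : Type*} [MeasurableSpace Ω]
    (μ : Measure Ω) [IsProbabilityMeasure μ]
    (K D : ℕ) (P : ℝ) (hP : 0 < P) (N0 : NNReal) (hN0 : N0 ≠ 0)
    (W S : Fin K → Ω → Fin D → ℝ) (z : Ω → Fin D → ℝ)
    (hWmeas : ∀ k, Measurable (W k)) (hSmeas : ∀ k, Measurable (S k))
    (hzmeas : Measurable z)
    -- each key is uniform on the torus cell `(-1/2, 1/2]^D`
    (hSunif : ∀ k, μ.map (S k) =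
      Measure.pi fun _ : Fin D => volume.restrict (Set.Ioc (-(1 / 2) : ℝ) (1 / 2)))
    -- modulo-zero-sum condition
    (hzero : ∀ ω d, zmod1 (∑ k, S k ω d) = 0)
    -- any `K-1` keys are mutually independent
    (hK1indep : ∀ k0 : Fin K,
      iIndepFun (fun i : {k : Fin K // k ≠ k0} => S i) μ)
    -- keys are independent of the messages
    (hWSindep : IndepFun (fun ω (k : Fin K) => W k ω) (fun ω (k : Fin K) => S k ω) μ)
    -- channel noise `z ~ N(0, N_0 I_D)`, independent of messages and keys
    (hzlaw : μ.map z = Measure.pi fun _ : Fin D => gaussianReal 0 N0)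
    (hzindep : IndepFun z (fun ω => (fun k : Fin K => W k ω, fun k : Fin K => S k ω)) μ) :
    condMutualInfo μ
      (fun ω (k : Fin K) => W k ω)
      (fun ω (d : Fin D) => Real.sqrt P * ∑ k, zmod1 (W k ω d + S k ω d) + z ω d)
      (fun ω (d : Fin D) => ∑ k, W k ω d) = 0 :=
  server_perfect_privacy_general μ K D P W S z hWmeas hSmeas hzmeas hSunif hzero hK1indep hWSindep
    hzindep
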